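/- Let X, Y, W ∈ ℝ[t] with W ≠ 0, define U := X'·W − X·W' and V := Y'·W − Y·W', and assume (U,V) ≠ (0,0). Set w := deg W, r := max(deg X, deg Y), s := max(deg U, deg V), assume w ≥ r, and let d > 0. Put p_∞ := (c(X,w)/c(W,w), c(Y,w)/c(W,w)), u := c(U,s), v := c(V,s), and n := (v, −u)/√(u² + v²). Then the set of points (x₀,y₀) ∈ ℝ² at which the coefficient of t^{s+w} of P̃ and the coefficient of t^{2w} of Q̃ (both polynomials in x, y) simultaneously vanish is exactly the two-point set { p_∞ + d·n , p_∞ − d·n }. -/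
import Mathlib


/-- Lift a univariate real polynomial in `t` to a polynomial in `t` whose coefficients
are polynomials in the two variables `x, y`. -/
noncomputable def liftT (p : Polynomial ℝ) : Polynomial (MvPolynomial (Fin 2) ℝ) :=
  p.map MvPolynomial.C

/-- `P̃ := U·(W·x − X) + V·(W·y − Y)`, viewed as a polynomial in `t` with
coefficients in `ℝ[x,y]` (where `x = X 0`, `y = X 1`). -/
noncomputable def Ptilde (X Y W U V : Polynomial ℝ) :
    Polynomial (MvPolynomial (Fin 2) ℝ) :=
  liftT U * (liftT W * Polynomial.C (MvPolynomial.X 0) - liftT X)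
    + liftT V * (liftT W * Polynomial.C (MvPolynomial.X 1) - liftT Y)

/-- `Q̃ := (W·x − X)² + (W·y − Y)² − d²·W²`, viewed as a polynomial in `t` with
coefficients in `ℝ[x,y]` (where `x = X 0`, `y = X 1`). -/
noncomputable def Qtilde (X Y W : Polynomial ℝ) (d : ℝ) :
    Polynomial (MvPolynomial (Fin 2) ℝ) :=
  (liftT W * Polynomial.C (MvPolynomial.X 0) - liftT X) ^ 2
    + (liftT W * Polynomial.C (MvPolynomial.X 1) - liftT Y) ^ 2
    - Polynomial.C (MvPolynomial.C (d ^ 2)) * (liftT W) ^ 2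

lemma liftT_map (p : Fin 2 → ℝ) (q : Polynomial ℝ) :
    (liftT q).map (MvPolynomial.eval p) = q := by
  rw [liftT, Polynomial.map_map]
  conv_rhs => rw [← Polynomial.map_id (p := q)]
  congr 1
  ext x : 1
  simp

lemma evalP (X Y W U V : Polynomial ℝ) (s w : ℕ)
    (hdU : U.natDegree ≤ s) (hdV : V.natDegree ≤ s)
    (hdW : W.natDegree ≤ w) (hdX : X.natDegree ≤ w) (hdY : Y.natDegree ≤ w)
    (p : Fin 2 → ℝ) :
    MvPolynomial.eval p ((Ptilde X Y W U V).coeff (s + w)) =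
      U.coeff s * (W.coeff w * p 0 - X.coeff w)
        + V.coeff s * (W.coeff w * p 1 - Y.coeff w) := by
  have hA : (W * Polynomial.C (p 0) - X).natDegree ≤ w :=
    (Polynomial.natDegree_sub_le _ _).trans
      (max_le ((Polynomial.natDegree_mul_le).trans (by simp [hdW])) hdX)
  have hB : (W * Polynomial.C (p 1) - Y).natDegree ≤ w :=
    (Polynomial.natDegree_sub_le _ _).trans
      (max_le ((Polynomial.natDegree_mul_le).trans (by simp [hdW])) hdY)
  rw [← Polynomial.coeff_map, Ptilde]
  simp only [Polynomial.map_add, Polynomial.map_mul, Polynomial.map_sub,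
    Polynomial.map_C, liftT_map, MvPolynomial.eval_X]
  rw [Polynomial.coeff_add, Polynomial.coeff_mul_add_eq_of_natDegree_le hdU hA,
    Polynomial.coeff_mul_add_eq_of_natDegree_le hdV hB]
  simp [Polynomial.coeff_sub, Polynomial.coeff_mul_C]
  try ring

lemma evalQ (X Y W : Polynomial ℝ) (d : ℝ) (w : ℕ)
    (hdW : W.natDegree ≤ w) (hdX : X.natDegree ≤ w) (hdY : Y.natDegree ≤ w)
    (p : Fin 2 → ℝ) :
    MvPolynomial.eval p ((Qtilde X Y W d).coeff (2 * w)) =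
      (W.coeff w * p 0 - X.coeff w) ^ 2
        + (W.coeff w * p 1 - Y.coeff w) ^ 2 - d ^ 2 * W.coeff w ^ 2 := by
  have hA : (W * Polynomial.C (p 0) - X).natDegree ≤ w :=
    (Polynomial.natDegree_sub_le _ _).trans
      (max_le ((Polynomial.natDegree_mul_le).trans (by simp [hdW])) hdX)
  have hB : (W * Polynomial.C (p 1) - Y).natDegree ≤ w :=
    (Polynomial.natDegree_sub_le _ _).trans
      (max_le ((Polynomial.natDegree_mul_le).trans (by simp [hdW])) hdY)
  rw [← Polynomial.coeff_map, Qtilde]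
  simp only [Polynomial.map_add, Polynomial.map_mul, Polynomial.map_sub,
    Polynomial.map_pow, Polynomial.map_C, liftT_map, MvPolynomial.eval_X,
    MvPolynomial.eval_C]
  rw [Polynomial.coeff_sub, Polynomial.coeff_add, two_mul, sq, sq,
    Polynomial.coeff_mul_add_eq_of_natDegree_le hA hA,
    Polynomial.coeff_mul_add_eq_of_natDegree_le hB hB,
    Polynomial.coeff_C_mul, sq W, Polynomial.coeff_mul_add_eq_of_natDegree_le hdW hdW]
  simp [Polynomial.coeff_sub, Polynomial.coeff_mul_C]
  try ring

lemma key_real (u v d ρ α β : ℝ) (hρ2 : ρ ^ 2 = u ^ 2 + v ^ 2) (hρ : 0 < ρ)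
    (h1 : u * α + v * β = 0) (h2 : α ^ 2 + β ^ 2 = d ^ 2) :
    (α = d * (v / ρ) ∧ β = d * (-u / ρ)) ∨
      (α = -(d * (v / ρ)) ∧ β = -(d * (-u / ρ))) := by
  have hρ0 : ρ ≠ 0 := ne_of_gt hρ
  have key2 : (α * v - β * u - d * ρ) * (α * v - β * u + d * ρ) = 0 := by
    linear_combination (u^2 + v^2) * h2 - d^2 * hρ2 - (α * u + β * v) * h1
  rcases mul_eq_zero.mp key2 with h | h
  · left
    constructor
    · field_simp
      apply mul_right_cancel₀ hρ0
      linear_combination α * hρ2 + u * h1 + v * h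
    · field_simp
      apply mul_right_cancel₀ hρ0
      linear_combination β * hρ2 + v * h1 - u * h
  · right
    constructor
    · field_simp
      apply mul_right_cancel₀ hρ0
      linear_combination α * hρ2 + u * h1 + v * h
    · field_simp
      apply mul_right_cancel₀ hρ0
      linear_combination β * hρ2 + v * h1 - u * h

lemma key_iff (u v d ρ cw cX cY a b xinf yinf : ℝ) (hcw : cw ≠ 0)
    (hρ2 : ρ ^ 2 = u ^ 2 + v ^ 2) (hρ : 0 < ρ)
    (hx : xinf = cX / cw) (hy : yinf = cY / cw) :
    (u * (cw * a - cX) + v * (cw * b - cY) = 0 ∧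
      (cw * a - cX) ^ 2 + (cw * b - cY) ^ 2 - d ^ 2 * cw ^ 2 = 0) ↔
    ((a = xinf + d * (v / ρ) ∧ b = yinf + d * (-u / ρ)) ∨
      (a = xinf - d * (v / ρ) ∧ b = yinf - d * (-u / ρ))) := by
  have hρ0 : ρ ≠ 0 := ne_of_gt hρ
  subst hx hy
  constructor
  · rintro ⟨h1, h2⟩
    have e1 : u * (a - cX / cw) + v * (b - cY / cw) = 0 := by
      have : cw * (u * (a - cX / cw) + v * (b - cY / cw)) = 0 := by
        field_simp
        linear_combination h1
      exact (mul_eq_zero.mp this).resolve_left hcw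
    have e2 : (a - cX / cw) ^ 2 + (b - cY / cw) ^ 2 = d ^ 2 := by
      have : cw ^ 2 * ((a - cX / cw) ^ 2 + (b - cY / cw) ^ 2 - d ^ 2) = 0 := by
        field_simp
        linear_combination h2
      have := (mul_eq_zero.mp this).resolve_left (pow_ne_zero 2 hcw)
      linarith
    rcases key_real u v d ρ (a - cX / cw) (b - cY / cw) hρ2 hρ e1 e2 with
      ⟨hA, hB⟩ | ⟨hA, hB⟩
    · left; constructor <;> linarith
    · right; constructor <;> linarith
  · rintro (⟨hA, hB⟩ | ⟨hA, hB⟩) <;> subst hA hB <;> constructor <;> field_simp <;>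
      first
        | ring1
        | linear_combination (-(cw ^ 2 * d ^ 2)) * hρ2
        | linear_combination (-(cw ^ 2 * d ^ 2 + cw ^ 4 * d ^ 2)) * hρ2
        | linear_combination (-(cw ^ 4 * d ^ 2)) * hρ2

theorem stmt4 (X Y W U V : Polynomial ℝ) (hW : W ≠ 0)
    (hU : U = Polynomial.derivative X * W - X * Polynomial.derivative W)
    (hV : V = Polynomial.derivative Y * W - Y * Polynomial.derivative W)
    (hUV : ¬(U = 0 ∧ V = 0))
    (w r s : ℕ) (hw : w = W.natDegree) (hr : r = max X.natDegree Y.natDegree)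
    (hs : s = max U.natDegree V.natDegree) (hwr : r ≤ w)
    (d : ℝ) (hd : 0 < d)
    (xinf yinf u v ρ : ℝ)
    (hxinf : xinf = X.coeff w / W.coeff w) (hyinf : yinf = Y.coeff w / W.coeff w)
    (hu : u = U.coeff s) (hv : v = V.coeff s)
    (hρ : ρ = Real.sqrt (u ^ 2 + v ^ 2)) :
    {p : Fin 2 → ℝ |
        MvPolynomial.eval p ((Ptilde X Y W U V).coeff (s + w)) = 0 ∧
        MvPolynomial.eval p ((Qtilde X Y W d).coeff (2 * w)) = 0} =
      ({![xinf + d * (v / ρ), yinf + d * (-u / ρ)],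
        ![xinf - d * (v / ρ), yinf - d * (-u / ρ)]} : Set (Fin 2 → ℝ)) := by
  subst hu hv
  have hmw : max X.natDegree Y.natDegree ≤ w := by rw [← hr]; exact hwr
  have hdX : X.natDegree ≤ w := le_trans (le_max_left _ _) hmw
  have hdY : Y.natDegree ≤ w := le_trans (le_max_right _ _) hmw
  have hdW : W.natDegree ≤ w := le_of_eq hw.symm
  have hdU : U.natDegree ≤ s := by rw [hs]; exact le_max_left _ _
  have hdV : V.natDegree ≤ s := by rw [hs]; exact le_max_right _ _
  have hcw : W.coeff w ≠ 0 := by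
    rw [hw, ← Polynomial.leadingCoeff]
    exact Polynomial.leadingCoeff_ne_zero.mpr hW
  have huv : U.coeff s ≠ 0 ∨ V.coeff s ≠ 0 := by
    by_contra h
    push_neg at h
    obtain ⟨h1, h2⟩ := h
    apply hUV
    rcases max_cases U.natDegree V.natDegree with ⟨hm, hle⟩ | ⟨hm, hlt⟩
    · have hU0 : U = 0 := by
        apply Polynomial.leadingCoeff_eq_zero.mp
        rw [Polynomial.leadingCoeff, ← hm, ← hs]
        exact h1
      have hVd : V.natDegree = 0 := by
        have : U.natDegree = 0 := by rw [hU0]; simp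
        omega
      have hs0 : s = 0 := by rw [hs, hm, hU0]; simp
      have hV0 : V = 0 := by
        rw [hs0] at h2
        have hC := Polynomial.eq_C_of_natDegree_le_zero (le_of_eq hVd)
        rw [hC, h2, map_zero]
      exact ⟨hU0, hV0⟩
    · have hV0 : V = 0 := by
        apply Polynomial.leadingCoeff_eq_zero.mp
        rw [Polynomial.leadingCoeff, ← hm, ← hs]
        exact h2
      have : V.natDegree = 0 := by rw [hV0]; simp
      omega
  have hsum : 0 < U.coeff s ^ 2 + V.coeff s ^ 2 := by
    rcases huv with h | h
    · positivity
    · positivity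
  have hρ2 : ρ ^ 2 = U.coeff s ^ 2 + V.coeff s ^ 2 := by
    rw [hρ]
    exact Real.sq_sqrt hsum.le
  have hρpos : 0 < ρ := by rw [hρ]; exact Real.sqrt_pos.mpr hsum
  ext p
  simp only [Set.mem_setOf_eq, Set.mem_insert_iff, Set.mem_singleton_iff]
  rw [evalP X Y W U V s w hdU hdV hdW hdX hdY p,
    evalQ X Y W d w hdW hdX hdY p]
  have hfun : ∀ c e : ℝ, p = ![c, e] ↔ p 0 = c ∧ p 1 = e := by
    intro c e
    rw [funext_iff, Fin.forall_fin_two]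
    simp
  rw [hfun, hfun]
  exact key_iff (U.coeff s) (V.coeff s) d ρ (W.coeff w) (X.coeff w) (Y.coeff w)
    (p 0) (p 1) xinf yinf hcw hρ2 hρpos hxinf hyinf
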